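/- arXiv:2211.04704 — 8 statements merged into one kernel-verified Lean document; each statement's English description precedes it below -/
import Mathlib

section
/- Let $g = h_0 + \sum_{n=1}^N h_n e^{i\theta_n^\star}$ where $(\theta_1^\star, \ldots, \theta_N^\star) \in \Phi_K^N$ maximizes $|h_0 + \sum_n h_n e^{i\theta_n}|$, and suppose $g \neq 0$. Then for each $n$, $\theta_n^\star$ minimizes the angular distance between $e^{i(\theta_n + \alpha_n)}$ and $g/|g|$ over $\theta_n \in \Phi_K$; that is, $\theta_n^\star \in \arg\min_{\theta \in \Phi_K} d(\theta + \alpha_n, \angle g)$, where $d(x,y)$ denotes the distance on the circle $\mathbb{R}/2\pi\mathbb{Z}$. -/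
open Real Complex

/-- Circular distance on ℝ / 2πℤ. -/
noncomputable def cdist (x y : ℝ) : ℝ := sInf (Set.range fun m : ℤ => |x - y + 2 * π * m|)

/-- The discrete phase-shift set Φ_K = {ω, 2ω, …, Kω}, ω = 2π/K. -/
def Phi (K : ℕ) : Set ℝ := {θ | ∃ k : ℕ, 1 ≤ k ∧ k ≤ K ∧ θ = k * (2 * π / K)}

/-!
If moving a single phase θ⋆ₙ to another θ ∈ Φ_K changes g into g + δ with
δ = hₙ (e^{iθ} - e^{iθ⋆ₙ}), maximality gives ‖g + δ‖ ≤ ‖g‖, hence Re (g δ̄) ≤ 0. Writing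
g = |g| e^{i∠g} and hₙ = βₙ e^{iαₙ}, this reads cos (θ + αₙ - ∠g) ≤ cos (θ⋆ₙ + αₙ - ∠g).
Since cos (d(x, y)) = cos (x - y) and d takes values in [0, π], where cos is strictly
decreasing, this is d(θ⋆ₙ + αₙ, ∠g) ≤ d(θ + αₙ, ∠g).
-/

open ComplexConjugate

lemma cdist_eq_abs_sub_round (x y : ℝ) :
    cdist x y = |x - y - round ((x - y) / (2 * π)) * (2 * π)| := by
  have hπ : (0 : ℝ) < 2 * π := by positivity
  have hscale : ∀ m : ℝ, x - y - m * (2 * π) = 2 * π * ((x - y) / (2 * π) - m) := by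
    intro m; field_simp
  apply le_antisymm
  · refine csInf_le ⟨0, by rintro _ ⟨m, rfl⟩; positivity⟩ ⟨-round ((x - y) / (2 * π)), ?_⟩
    beta_reduce
    congr 1
    push_cast
    ring
  · refine le_csInf ⟨_, Set.mem_range_self 0⟩ ?_
    rintro _ ⟨m, rfl⟩
    have hm : x - y + 2 * π * m = x - y - ((-m : ℤ) : ℝ) * (2 * π) := by push_cast; ring
    simp only [hm, hscale, abs_mul, abs_of_pos hπ]
    exact mul_le_mul_of_nonneg_left (round_le _ _) hπ.le

lemma cdist_mem_Icc (x y : ℝ) : cdist x y ∈ Set.Icc 0 π := by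
  refine ⟨cdist_eq_abs_sub_round x y ▸ abs_nonneg _, ?_⟩
  have hscale : x - y - round ((x - y) / (2 * π)) * (2 * π)
      = 2 * π * ((x - y) / (2 * π) - round ((x - y) / (2 * π))) := by
    field_simp
  rw [cdist_eq_abs_sub_round, hscale, abs_mul, abs_of_pos (by positivity : (0 : ℝ) < 2 * π)]
  nlinarith [abs_sub_round ((x - y) / (2 * π)), Real.pi_pos]

lemma cos_cdist (x y : ℝ) : Real.cos (cdist x y) = Real.cos (x - y) := by
  rw [cdist_eq_abs_sub_round, Real.cos_abs, Real.cos_sub_int_mul_two_pi]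

lemma cdist_le_cdist_iff_cos_le (x y z : ℝ) :
    cdist x z ≤ cdist y z ↔ Real.cos (y - z) ≤ Real.cos (x - z) := by
  rw [← cos_cdist, ← cos_cdist]
  exact Real.strictAntiOn_cos.le_iff_ge (cdist_mem_Icc y z) (cdist_mem_Icc x z) |>.symm

lemma Fintype.sum_update_eq_add_sub {ι α M : Type*} [Fintype ι] [DecidableEq ι]
    [AddCommGroup M] (F : ι → α → M) (x : ι → α) (i : ι) (a : α) :
    ∑ k, F k (Function.update x i a k) = ∑ k, F k (x k) + (F i a - F i (x i)) := by
  have hrest : ∑ k ∈ Finset.univ.erase i, F k (Function.update x i a k)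
      = ∑ k ∈ Finset.univ.erase i, F k (x k) :=
    Finset.sum_congr rfl fun k hk => by rw [Function.update_of_ne (Finset.ne_of_mem_erase hk)]
  rw [← Finset.add_sum_erase _ _ (Finset.mem_univ i),
    ← Finset.add_sum_erase _ _ (Finset.mem_univ i), hrest, Function.update_self]
  abel

lemma Complex.re_mul_conj_nonpos_of_norm_add_le {g δ : ℂ} (h : ‖g + δ‖ ≤ ‖g‖) :
    (g * conj δ).re ≤ 0 := by
  have hsq : ‖g + δ‖ ^ 2 ≤ ‖g‖ ^ 2 := pow_le_pow_left₀ (norm_nonneg _) h 2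
  rw [Complex.sq_norm, Complex.sq_norm, Complex.normSq_add] at hsq
  nlinarith [Complex.normSq_nonneg δ]

lemma Complex.re_mul_conj_ofReal_mul_exp (g : ℂ) (r x : ℝ) :
    (g * conj (r * exp (x * I))).re = ‖g‖ * r * Real.cos (x - g.arg) := by
  have hprod : g * conj (r * exp (x * I)) = ((‖g‖ * r : ℝ) : ℂ) * exp ((g.arg - x : ℝ) * I) := by
    conv_lhs => rw [← norm_mul_exp_arg_mul_I g]
    rw [map_mul, conj_ofReal, ← exp_conj, map_mul, conj_ofReal, conj_I, mul_neg]
    push_cast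
    rw [sub_mul, sub_eq_add_neg, Complex.exp_add]
    ring
  rw [hprod, re_ofReal_mul, exp_ofReal_mul_I_re, ← Real.cos_neg, neg_sub]

theorem stmt_1_general (K N : ℕ) (β α : Fin (N + 1) → ℝ) (hβ : ∀ n, 0 < β n)
    (h : Fin (N + 1) → ℂ)
    (hh : ∀ n, h n = (β n : ℂ) * Complex.exp ((α n : ℂ) * Complex.I))
    (θs : Fin N → ℝ) (hθs : ∀ n, θs n ∈ Phi K)
    (hmax : ∀ θ : Fin N → ℝ, (∀ n, θ n ∈ Phi K) →
      ‖h 0 + ∑ n : Fin N, h n.succ * Complex.exp (θ n * Complex.I)‖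
        ≤ ‖h 0 + ∑ n : Fin N, h n.succ * Complex.exp (θs n * Complex.I)‖)
    (g : ℂ) (hg : g = h 0 + ∑ n : Fin N, h n.succ * Complex.exp (θs n * Complex.I))
    (hg0 : g ≠ 0) :
    ∀ n : Fin N, ∀ θ ∈ Phi K, cdist (θs n + α n.succ) g.arg ≤ cdist (θ + α n.succ) g.arg := by
  intro n θ hθ
  have hterm : ∀ t : ℝ, h n.succ * exp (t * I) = β n.succ * exp ((t + α n.succ : ℝ) * I) := by
    intro t
    rw [hh, mul_assoc, ← Complex.exp_add, ofReal_add, add_mul, add_comm]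
  have hupdate : ∀ k, Function.update θs n θ k ∈ Phi K := by
    intro k
    rcases eq_or_ne k n with rfl | hk
    · simpa using hθ
    · simpa [Function.update_of_ne hk] using hθs k
  have hle := hmax _ hupdate
  rw [Fintype.sum_update_eq_add_sub (fun (k : Fin N) (t : ℝ) => h k.succ * exp (t * I)),
    ← add_assoc, ← hg, hterm, hterm] at hle
  have hre := Complex.re_mul_conj_nonpos_of_norm_add_le hle
  rw [map_sub, mul_sub, sub_re, Complex.re_mul_conj_ofReal_mul_exp,
    Complex.re_mul_conj_ofReal_mul_exp, ← mul_sub] at hre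
  have hpos : 0 < ‖g‖ * β n.succ := mul_pos (norm_pos_iff.mpr hg0) (hβ n.succ)
  exact (cdist_le_cdist_iff_cos_le _ _ _).mpr (by nlinarith)

theorem stmt_1 (K N : ℕ) (hK : 1 ≤ K) (β α : Fin (N + 1) → ℝ) (hβ : ∀ n, 0 < β n)
    (h : Fin (N + 1) → ℂ)
    (hh : ∀ n, h n = (β n : ℂ) * Complex.exp ((α n : ℂ) * Complex.I))
    (θs : Fin N → ℝ) (hθs : ∀ n, θs n ∈ Phi K)
    (hmax : ∀ θ : Fin N → ℝ, (∀ n, θ n ∈ Phi K) →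
      ‖h 0 + ∑ n : Fin N, h n.succ * Complex.exp (θ n * Complex.I)‖
        ≤ ‖h 0 + ∑ n : Fin N, h n.succ * Complex.exp (θs n * Complex.I)‖)
    (g : ℂ) (hg : g = h 0 + ∑ n : Fin N, h n.succ * Complex.exp (θs n * Complex.I))
    (hg0 : g ≠ 0) :
    ∀ n : Fin N, ∀ θ ∈ Phi K, cdist (θs n + α n.succ) g.arg ≤ cdist (θ + α n.succ) g.arg :=
  stmt_1_general K N β α hβ h hh θs hθs hmax g hg hg0
end

section
/- Let $(\theta_1^\star, \ldots, \theta_N^\star) \in \Phi_K^N$ be a maximizer of $|g(\theta)| = |h_0 + \sum_{n=1}^N h_n e^{i\theta_n}|$ with $g^\star = g(\theta^\star) \neq 0$, and let $\mu = g^\star / |g^\star|$. Then for every $n \in \{1, \ldots, N\}$ and every $k \in \{1, \ldots, K\}$, we have $\mu \neq e^{i(\alpha_n + (k - 0.5)\omega)}$; that is, the optimal normalized total channel never coincides with any arc endpoint $s_{nk}$. -/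
/-!
Suppose `μ = g / ‖g‖` equals `s_{nk}` and write `g = c + h_n e^{iθ_n}`. Then `Re (μ̄ g) = ‖g‖`, while
for every phase `φ` we have `Re (μ̄ (c + h_n e^{iφ})) = Re (μ̄ c) + β_n cos (φ - (k - 1/2) ω)`.
Every phase of `Φ_K` lies at angular distance at least `ω / 2` from `(k - 1/2) ω`, and both
neighbours `kω` and `(k - 1) ω` attain it. Switching `θ_n` to either neighbour therefore does not
decrease the projection on `μ`; as `‖g‖` is maximal and `Re ≤ ‖·‖`, the switch leaves `g`
unchanged, whence `e^{ikω} = e^{iθ_n} = e^{i(k-1)ω}`, contradicting `e^{iω} ≠ 1`.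
-/

open Real Complex

open ComplexConjugate
open scoped ComplexOrder

theorem Finset.sum_univ_apply_update {ι α M : Type*} [Fintype ι] [DecidableEq ι] [AddCommGroup M]
    (F : ι → α → M) (θ : ι → α) (i : ι) (a : α) :
    ∑ j, F j (Function.update θ i a j) = ∑ j, F j (θ j) - F i (θ i) + F i a := by
  simp_rw [Function.apply_update F θ i a]
  rw [Finset.sum_update_of_mem (Finset.mem_univ i), ← Finset.add_sum_erase _ _ (Finset.mem_univ i),
    Finset.sdiff_singleton_eq_erase]
  abel

theorem norm_add_sum_sub_add_le_of_forall_norm_le {ι α E : Type*} [Fintype ι] [DecidableEq ι]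
    [SeminormedAddCommGroup E] {S : Set α} (c : E) (F : ι → α → E) {θ : ι → α}
    (hθ : ∀ i, θ i ∈ S)
    (hmax : ∀ θ' : ι → α, (∀ i, θ' i ∈ S) → ‖c + ∑ i, F i (θ' i)‖ ≤ ‖c + ∑ i, F i (θ i)‖)
    (i : ι) {a : α} (ha : a ∈ S) :
    ‖c + (∑ j, F j (θ j) - F i (θ i) + F i a)‖ ≤ ‖c + ∑ j, F j (θ j)‖ := by
  rw [← Finset.sum_univ_apply_update]
  refine hmax _ fun j ↦ ?_
  rcases eq_or_ne j i with rfl | hj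
  · simpa using ha
  · simpa [hj] using hθ j

theorem Real.cos_le_cos_of_le_of_le_two_pi_sub {δ x : ℝ} (hδ : 0 ≤ δ) (hδx : δ ≤ x)
    (hx : x ≤ 2 * π - δ) : cos x ≤ cos δ := by
  rcases le_total x π with hxπ | hπx
  · exact cos_le_cos_of_nonneg_of_le_pi hδ hxπ hδx
  · rw [← cos_two_pi_sub x]
    exact cos_le_cos_of_nonneg_of_le_pi hδ (by linarith) (by linarith)

theorem Real.cos_odd_mul_pi_div_le {K : ℕ} (hK : 0 < K) (m : ℤ) :
    cos ((m + 1 / 2) * (2 * π / K)) ≤ cos (π / K) := by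
  have hK' : (0 : ℝ) < K := by exact_mod_cast hK
  have hr0 : (0 : ℝ) ≤ (m % K : ℤ) := by exact_mod_cast Int.emod_nonneg m (by omega)
  have hrK : ((m % K : ℤ) : ℝ) + 1 ≤ K := by exact_mod_cast Int.emod_lt_of_pos m (by omega)
  have hm : (m : ℝ) = K * (m / K : ℤ) + (m % K : ℤ) := by
    exact_mod_cast (Int.mul_ediv_add_emod m K).symm
  have hshift : ((m : ℝ) + 1 / 2) * (2 * π / K)
      = (2 * (m % K : ℤ) + 1) * (π / K) + (m / K : ℤ) * (2 * π) := by
    rw [hm]; field_simp; ring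
  have hπK : 0 < π / K := by positivity
  have h2π : 2 * π = 2 * K * (π / K) := by field_simp
  rw [hshift, cos_add_int_mul_two_pi]
  apply cos_le_cos_of_le_of_le_two_pi_sub hπK.le <;> nlinarith

theorem Complex.eq_of_norm_le_of_re_conj_mul_le {z w μ : ℂ} (hμ : ‖μ‖ = 1) (hz : z = ‖z‖ * μ)
    (hw : ‖w‖ ≤ ‖z‖) (hre : (conj μ * z).re ≤ (conj μ * w).re) : w = z := by
  have hμμ : conj μ * μ = 1 := by rw [conj_mul', hμ]; norm_num
  have hrot : conj μ * z = ‖z‖ := by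
    rw [hz, mul_left_comm, hμμ, mul_one, norm_mul, hμ, mul_one, norm_real, norm_norm]
  have hnorm : ‖conj μ * w‖ = ‖w‖ := by rw [norm_mul, RCLike.norm_conj, hμ, one_mul]
  have hle : ‖z‖ ≤ (conj μ * w).re := by simpa [hrot] using hre
  have hnonneg : 0 ≤ conj μ * w :=
    re_eq_norm.1 (le_antisymm (re_le_norm _) (by linarith [hnorm]))
  have hw' : conj μ * w = ‖z‖ := by
    rw [eq_coe_norm_of_nonneg hnonneg, hnorm]
    congr 1
    linarith [re_le_norm (conj μ * w)]
  calc w = μ * (conj μ * w) := by rw [← mul_assoc, mul_comm μ, hμμ, one_mul]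
    _ = z := by rw [hw', mul_comm, ← hz]

theorem Complex.re_conj_cexp_mul (β α ψ φ : ℝ) :
    (conj (cexp (↑(α + ψ) * I)) * (β * cexp (α * I) * cexp (φ * I))).re
      = β * Real.cos (φ - ψ) := by
  have hrot : conj (cexp (↑(α + ψ) * I)) * (β * cexp (α * I) * cexp (φ * I))
      = β * cexp (↑(φ - ψ) * I) := by
    rw [← exp_conj, map_mul, conj_ofReal, conj_I,
      show (↑(φ - ψ) : ℂ) * I = ↑(α + ψ) * -I + ↑α * I + ↑φ * I by push_cast; ring,
      exp_add, exp_add]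
    ring
  rw [hrot, re_ofReal_mul, exp_ofReal_mul_I_re]

theorem Complex.cexp_eq_of_cos_le {g c a : ℂ} {β α θ φ ψ : ℝ} (hβ : 0 < β)
    (ha : a = β * cexp (α * I)) (hgc : g = c + a * cexp (θ * I)) (hg : g ≠ 0)
    (hdir : g / ‖g‖ = cexp (↑(α + ψ) * I)) (hnorm : ‖c + a * cexp (φ * I)‖ ≤ ‖g‖)
    (hcos : Real.cos (θ - ψ) ≤ Real.cos (φ - ψ)) : cexp (φ * I) = cexp (θ * I) := by
  have hz : g = ‖g‖ * cexp (↑(α + ψ) * I) := by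
    rw [← hdir, mul_div_cancel₀ _ (ofReal_ne_zero.2 (norm_ne_zero_iff.2 hg))]
  have hre : (conj (cexp (↑(α + ψ) * I)) * g).re
      ≤ (conj (cexp (↑(α + ψ) * I)) * (c + a * cexp (φ * I))).re := by
    rw [hgc, mul_add, mul_add, add_re, add_re, ha, re_conj_cexp_mul, re_conj_cexp_mul]
    gcongr
  have hw := eq_of_norm_le_of_re_conj_mul_le (norm_exp_ofReal_mul_I _) hz hnorm hre
  have ha0 : a ≠ 0 := by rw [ha]; exact mul_ne_zero (ofReal_ne_zero.2 hβ.ne') (exp_ne_zero _)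
  rw [hgc] at hw
  exact mul_left_cancel₀ ha0 (add_left_cancel hw)

theorem exists_mem_Phi_cexp_eq {K j : ℕ} (hj : j < K) :
    ∃ φ ∈ Phi K, cexp (φ * I) = cexp (↑(j * (2 * π / K)) * I) := by
  rcases Nat.eq_zero_or_pos j with rfl | hj0
  · refine ⟨K * (2 * π / K), ⟨K, hj, le_rfl, rfl⟩, ?_⟩
    rw [mul_div_cancel₀ _ (by exact_mod_cast hj.ne')]
    simp [exp_two_pi_mul_I]
  · exact ⟨_, ⟨j, hj0, hj.le, rfl⟩, rfl⟩

theorem stmt_5 (K N : ℕ) (hK : 2 ≤ K) (ω : ℝ) (hω : ω = 2 * π / K)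
    (β α : Fin (N + 1) → ℝ) (hβ : ∀ n, 0 < β n)
    (h : Fin (N + 1) → ℂ)
    (hh : ∀ n, h n = (β n : ℂ) * Complex.exp ((α n : ℂ) * Complex.I))
    (θs : Fin N → ℝ) (hθs : ∀ n, θs n ∈ Phi K)
    (hmax : ∀ θ : Fin N → ℝ, (∀ n, θ n ∈ Phi K) →
      ‖h 0 + ∑ n : Fin N, h n.succ * Complex.exp (θ n * Complex.I)‖
        ≤ ‖h 0 + ∑ n : Fin N, h n.succ * Complex.exp (θs n * Complex.I)‖)
    (g : ℂ) (hg : g = h 0 + ∑ n : Fin N, h n.succ * Complex.exp (θs n * Complex.I))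
    (hg0 : g ≠ 0) :
    ∀ n : Fin N, ∀ k : ℕ, 1 ≤ k → k ≤ K →
      g / ‖g‖ ≠ Complex.exp ((↑(α n.succ + ((k : ℝ) - 0.5) * ω)) * Complex.I) := by
  intro n k hk1 hkK hdir
  set c := g - h n.succ * cexp (θs n * I)
  have hnorm : ∀ φ ∈ Phi K, ‖c + h n.succ * cexp (φ * I)‖ ≤ ‖g‖ := fun φ hφ ↦ by
    have := norm_add_sum_sub_add_le_of_forall_norm_le (h 0)
      (fun (m : Fin N) (t : ℝ) ↦ h m.succ * cexp (t * I)) hθs hmax n hφ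
    rw [← hg] at this
    refine le_of_eq_of_le (congrArg norm ?_) this
    simp only [c, hg]; ring
  have key : ∀ φ : ℝ, ‖c + h n.succ * cexp (φ * I)‖ ≤ ‖g‖ →
      Real.cos (θs n - (k - 0.5) * ω) ≤ Real.cos (φ - (k - 0.5) * ω) →
      cexp (φ * I) = cexp (θs n * I) :=
    fun φ hφ hcos ↦ cexp_eq_of_cos_le (hβ n.succ) (hh n.succ) (by ring) hg0 hdir hφ hcos
  obtain ⟨j, -, -, hj⟩ := hθs n
  have hcos : Real.cos (θs n - (k - 0.5) * ω) ≤ Real.cos (ω / 2) := by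
    convert Real.cos_odd_mul_pi_div_le (K := K) (by omega) (j - k) using 2
    · rw [hj, hω]; push_cast; ring
    · rw [hω]; ring
  have hup : cexp (↑(k * ω) * I) = cexp (θs n * I) :=
    key _ (hnorm _ ⟨k, hk1, hkK, by rw [hω]⟩) (by convert hcos using 2; ring)
  obtain ⟨φ, hφ, hφe⟩ := exists_mem_Phi_cexp_eq (K := K) (j := k - 1) (by omega)
  have hdown : cexp (↑((k - 1 : ℕ) * ω) * I) = cexp (θs n * I) :=
    key _ (by rw [hω, ← hφe]; exact hnorm φ hφ)
      (by convert hcos using 1; rw [← Real.cos_neg]; push_cast [Nat.cast_sub hk1]; ring_nf)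
  have hω1 : cexp (ω * I) = 1 := by
    have hsplit : cexp (↑(k * ω) * I) = cexp (↑((k - 1 : ℕ) * ω) * I) * cexp (ω * I) := by
      rw [← Complex.exp_add]; push_cast [Nat.cast_sub hk1]; ring_nf
    rw [hup, hdown] at hsplit
    exact (mul_eq_left₀ (Complex.exp_ne_zero _)).1 hsplit.symm
  refine (isPrimitiveRoot_exp K (by omega)).ne_one (by omega) ?_
  rw [← hω1, hω]; push_cast; ring_nf
end

section
/- Let $v \in \mathbb{C}$ be nonzero and $\omega \in (0, \pi)$. Suppose $u \in \mathbb{C}$ is nonzero and the points $v e^{i(k-1)\omega}$ and $v e^{ik\omega}$ are symmetric about the direction of $u + v e^{ik\omega}$, i.e., $\angle(u + v e^{ik\omega}) = \angle v + (k - 0.5)\omega \pmod{2\pi}$. Then $|u + v e^{i(k-1)\omega}| > |u + v e^{ik\omega}|$. -/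
open Real Complex

lemma cdist_eq_zero {x y : ℝ} (h : cdist x y = 0) : ∃ m : ℤ, x - y + 2 * π * m = 0 := by
  set c := x - y with hc
  have hbdd : BddBelow (Set.range fun m : ℤ => |c + 2 * π * m|) := by
    refine ⟨0, ?_⟩
    rintro z ⟨m, rfl⟩
    exact abs_nonneg _
  have hne : (Set.range fun m : ℤ => |c + 2 * π * m|).Nonempty := ⟨_, ⟨0, rfl⟩⟩
  have key : ∀ ε : ℝ, 0 < ε → ∃ m : ℤ, |c + 2 * π * m| < ε := by
    intro ε hε
    have : sInf (Set.range fun m : ℤ => |c + 2 * π * m|) < ε := by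
      rw [show sInf (Set.range fun m : ℤ => |c + 2 * π * m|) = cdist x y from rfl, h]
      exact hε
    obtain ⟨z, ⟨m, rfl⟩, hz⟩ := (csInf_lt_iff hbdd hne).mp this
    exact ⟨m, hz⟩
  obtain ⟨m₁, hm₁⟩ := key π Real.pi_pos
  by_cases h0 : c + 2 * π * m₁ = 0
  · exact ⟨m₁, h0⟩
  · exfalso
    obtain ⟨m₂, hm₂⟩ := key _ (abs_pos.mpr h0)
    have hm₂π : |c + 2 * π * m₂| < π := lt_trans hm₂ hm₁
    have hd : |2 * π * (m₁ : ℝ) - 2 * π * m₂| < 2 * π :=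
      calc |2 * π * (m₁ : ℝ) - 2 * π * m₂|
          = |(c + 2 * π * m₁) - (c + 2 * π * m₂)| := by ring_nf
        _ ≤ |c + 2 * π * m₁| + |c + 2 * π * m₂| := abs_sub _ _
        _ < π + π := add_lt_add hm₁ hm₂π
        _ = 2 * π := by ring
    have h2 : |(m₁ : ℝ) - m₂| < 1 := by
      have hπ : (0:ℝ) < 2 * π := by positivity
      rw [show 2 * π * (m₁:ℝ) - 2 * π * m₂ = 2 * π * ((m₁:ℝ) - m₂) by ring,
        abs_mul, abs_of_pos hπ] at hd
      nlinarith [abs_nonneg ((m₁:ℝ) - m₂)]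
    have h2' : |m₁ - m₂| < 1 := by
      have : |((m₁ - m₂ : ℤ) : ℝ)| < 1 := by push_cast; exact h2
      exact_mod_cast this
    rw [abs_lt] at h2'
    have heq : m₂ = m₁ := by omega
    rw [heq] at hm₂
    exact lt_irrefl _ hm₂

theorem stmt_7 (v u : ℂ) (hv : v ≠ 0) (hu : u ≠ 0) (ω : ℝ) (hω : 0 < ω) (hωπ : ω < π)
    (k : ℤ)
    (hne : u + v * Complex.exp ((↑((k : ℝ) * ω)) * Complex.I) ≠ 0)
    (hbisect : cdist (u + v * Complex.exp ((↑((k : ℝ) * ω)) * Complex.I)).arg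
      (v.arg + ((k : ℝ) - 0.5) * ω) = 0) :
    ‖u + v * Complex.exp ((↑((k : ℝ) * ω)) * Complex.I)‖
      < ‖u + v * Complex.exp ((↑(((k : ℝ) - 1) * ω)) * Complex.I)‖ := by
  set θ : ℝ := v.arg + ((k : ℝ) - 0.5) * ω with hθ
  set g : ℂ := u + v * Complex.exp ((↑((k : ℝ) * ω)) * Complex.I) with hg
  set r : ℝ := ‖g‖ with hr
  set V : ℝ := ‖v‖ with hV
  obtain ⟨m, hm⟩ := cdist_eq_zero hbisect
  have harg : g.arg = θ - 2 * π * m := by linarith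
  have hg2 : g = (r : ℂ) * Complex.exp ((θ : ℝ) * Complex.I) := by
    have h1 : g = (r : ℂ) * Complex.exp (g.arg * Complex.I) :=
      (Complex.norm_mul_exp_arg_mul_I g).symm
    rw [h1, harg]
    congr 1
    rw [show ((↑(θ - 2 * π * m) : ℂ) * Complex.I) = (θ:ℝ) * Complex.I + (-m : ℤ) * (2 * (π:ℂ) * Complex.I) by push_cast; ring,
      Complex.exp_add, Complex.exp_int_mul_two_pi_mul_I, mul_one]
  have hv2 : v = (V : ℂ) * Complex.exp ((v.arg : ℝ) * Complex.I) :=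
    (Complex.norm_mul_exp_arg_mul_I v).symm
  have e1 : v * Complex.exp ((↑((k : ℝ) * ω)) * Complex.I)
      = (V : ℂ) * Complex.exp ((θ : ℝ) * Complex.I) * Complex.exp (((ω/2 : ℝ) : ℂ) * Complex.I) := by
    rw [hv2, mul_assoc, ← Complex.exp_add, mul_assoc, ← Complex.exp_add]
    congr 2
    push_cast [hθ]
    norm_num
    ring
  have e2 : v * Complex.exp ((↑(((k : ℝ) - 1) * ω)) * Complex.I)
      = (V : ℂ) * Complex.exp ((θ : ℝ) * Complex.I) * Complex.exp (((-(ω/2) : ℝ) : ℂ) * Complex.I) := by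
    rw [hv2, mul_assoc, ← Complex.exp_add, mul_assoc, ← Complex.exp_add]
    congr 2
    push_cast [hθ]
    norm_num
    ring
  have key : u + v * Complex.exp ((↑(((k : ℝ) - 1) * ω)) * Complex.I)
      = Complex.exp ((θ : ℝ) * Complex.I) * ((r : ℂ) + (-(2 * V * Real.sin (ω/2)) : ℝ) * Complex.I) := by
    have hu' : u = g - v * Complex.exp ((↑((k : ℝ) * ω)) * Complex.I) := by
      rw [hg]; ring
    rw [hu', e1, e2, hg2]
    have e3 : Complex.exp (((-(ω/2) : ℝ) : ℂ) * Complex.I) - Complex.exp (((ω/2 : ℝ) : ℂ) * Complex.I)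
        = ((-(2 * Real.sin (ω/2)) : ℝ) : ℂ) * Complex.I := by
      rw [Complex.exp_mul_I, Complex.exp_mul_I]
      push_cast
      rw [Complex.cos_neg, Complex.sin_neg]
      ring
    rw [show ((r : ℂ) * Complex.exp ((θ : ℝ) * Complex.I)
        - (V : ℂ) * Complex.exp ((θ : ℝ) * Complex.I) * Complex.exp (((ω/2 : ℝ) : ℂ) * Complex.I)
        + (V : ℂ) * Complex.exp ((θ : ℝ) * Complex.I) * Complex.exp (((-(ω/2) : ℝ) : ℂ) * Complex.I))
      = Complex.exp ((θ : ℝ) * Complex.I) * ((r : ℂ)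
        + (V : ℂ) * (Complex.exp (((-(ω/2) : ℝ) : ℂ) * Complex.I) - Complex.exp (((ω/2 : ℝ) : ℂ) * Complex.I))) by ring,
      e3]
    push_cast
    ring
  rw [key, norm_mul, Complex.norm_exp_ofReal_mul_I, one_mul]
  have habs : ‖(r : ℂ) + ((-(2 * V * Real.sin (ω/2)) : ℝ) : ℂ) * Complex.I‖
      = Real.sqrt (r ^ 2 + (-(2 * V * Real.sin (ω/2))) ^ 2) := Complex.norm_add_mul_I _ _
  rw [habs]
  have hsin : 0 < Real.sin (ω/2) := Real.sin_pos_of_pos_of_lt_pi (by linarith) (by linarith)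
  have hVpos : 0 < V := norm_pos_iff.mpr hv
  have h2v : 0 < 2 * V * Real.sin (ω/2) := mul_pos (mul_pos two_pos hVpos) hsin
  have hc : 0 < (-(2 * V * Real.sin (ω/2))) ^ 2 := by nlinarith
  have hrnn : 0 ≤ r := norm_nonneg g
  calc r = Real.sqrt (r ^ 2) := (Real.sqrt_sq hrnn).symm
    _ < Real.sqrt (r ^ 2 + (-(2 * V * Real.sin (ω/2))) ^ 2) :=
        Real.sqrt_lt_sqrt (by positivity) (by linarith)
end

section
/- Let $(\theta_1^\star, \ldots, \theta_N^\star)$ be an optimal solution to the discrete beamforming problem with optimal total channel $g \neq 0$. Then the argument of $g$ deviates from the argument $\alpha_0$ of the direct channel $h_0$ by strictly less than $2\pi/K$ in circular distance: $d(\angle g, \alpha_0) < 2\pi/K$. -/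
/-!
Write `ω = 2π/K` and `r` for the reflected part of `g`. Since `Φ_K` is a full set of
representatives of `ωℤ` modulo `2π`, rotating every optimal phase by `±ω` gives admissible
phases, so optimality yields `‖h₀ + e^{±iω} r‖ ≤ ‖h₀ + r‖`. After rotating by `e^{-iα₀}` this
says that `r` lies in the closed sector of half-angle `ω/2` around the direction of `h₀`. That
sector is a convex cone containing `h₀`, so it contains `g = h₀ + r` as well, which gives
`d(∠g, α₀) ≤ ω/2`.
-/

open Real Complex

lemma exists_mem_Phi_exp_eq {K : ℕ} (hK : 0 < K) (m : ℤ) :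
    ∃ θ ∈ Phi K, exp (θ * I) = exp (↑(m * (2 * π / K)) * I) := by
  -- the representative of `m` modulo `K` in `{1, …, K}`
  set k : ℤ := (m - 1) % K + 1 with hk
  have hk1 : 1 ≤ k := by have := Int.emod_nonneg (m - 1) (by omega : (K : ℤ) ≠ 0); omega
  have hkK : k ≤ K := by have := Int.emod_lt_of_pos (m - 1) (by omega : (0 : ℤ) < K); omega
  refine ⟨k.toNat * (2 * π / K), ⟨k.toNat, by omega, by omega, rfl⟩, ?_⟩
  rw [exp_eq_exp_iff_exists_int]
  refine ⟨-((m - 1) / K), ?_⟩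
  have hK0 : (K : ℂ) ≠ 0 := by exact_mod_cast hK.ne'
  have hkm : (k : ℝ) = m - K * ((m - 1) / K : ℤ) := by
    rw [hk, Int.emod_def]; push_cast; ring
  have : ((k.toNat : ℕ) : ℝ) = k := by exact_mod_cast Int.toNat_of_nonneg (by omega)
  rw [this, hkm]
  push_cast
  field_simp
  ring

lemma exists_mem_Phi_exp_eq_exp_mul {K : ℕ} (hK : 0 < K) {θ : ℝ} (hθ : θ ∈ Phi K) (j : ℤ) :
    ∃ θ' ∈ Phi K, exp (θ' * I) = exp (↑(j * (2 * π / K)) * I) * exp (θ * I) := by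
  obtain ⟨k, -, -, rfl⟩ := hθ
  obtain ⟨θ', hθ', he⟩ := exists_mem_Phi_exp_eq hK (j + k)
  refine ⟨θ', hθ', ?_⟩
  rw [he, ← Complex.exp_add]
  push_cast
  ring_nf

lemma cdist_le_abs_of_coe_eq {x y t : ℝ} (h : (t : Real.Angle) = ↑(x - y)) :
    cdist x y ≤ |t| := by
  obtain ⟨m, hm⟩ := Real.Angle.angle_eq_iff_two_pi_dvd_sub.mp h
  refine csInf_le ⟨0, ?_⟩ ⟨m, ?_⟩
  · rintro _ ⟨n, rfl⟩
    positivity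
  · dsimp only
    congr 1
    linarith

lemma coe_arg_mul_exp_neg {z : ℂ} (hz : z ≠ 0) (α : ℝ) :
    (arg (z * exp (↑(-α) * I)) : Real.Angle) = ↑(arg z - α) := by
  rw [arg_mul_coe_angle hz (exp_ne_zero _), arg_exp_mul_I, sub_eq_add_neg, Real.Angle.coe_add]
  congr 1
  exact Real.Angle.coe_toIocMod _ _

lemma re_le_re_of_norm_ofReal_add_le {b : ℝ} (hb : 0 < b) {v w : ℂ} (hvw : ‖v‖ = ‖w‖)
    (h : ‖(b : ℂ) + v‖ ≤ ‖(b : ℂ) + w‖) : v.re ≤ w.re := by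
  have h2 := pow_le_pow_left₀ (norm_nonneg _) h 2
  have hvw2 := congrArg (· ^ 2) hvw
  simp only [Complex.sq_norm, normSq_apply, add_re, add_im, ofReal_re, ofReal_im,
    zero_add] at h2 hvw2
  nlinarith

/-- For `0 < ω ≤ π` this is the closed sector `|arg w| ≤ ω / 2`, written through
`tan (ω / 2) = (1 - cos ω) / sin ω` so that it is visibly closed under addition. -/
def sector (ω : ℝ) : Set ℂ := {w | |Real.sin ω * w.im| ≤ (1 - Real.cos ω) * w.re}

lemma ofReal_mem_sector (ω : ℝ) {b : ℝ} (hb : 0 ≤ b) : (b : ℂ) ∈ sector ω := by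
  simp only [sector, Set.mem_ofPred_eq, ofReal_im, mul_zero, abs_zero, ofReal_re]
  exact mul_nonneg (sub_nonneg.mpr (Real.cos_le_one ω)) hb

lemma add_mem_sector {ω : ℝ} {v w : ℂ} (hv : v ∈ sector ω) (hw : w ∈ sector ω) :
    v + w ∈ sector ω := by
  simp only [sector, Set.mem_ofPred_eq, add_im, add_re, mul_add] at *
  exact (abs_add_le _ _).trans (add_le_add hv hw)

lemma mem_sector_of_re_le {ω : ℝ} {w : ℂ} (hup : (exp (ω * I) * w).re ≤ w.re)
    (hdn : (exp (↑(-ω) * I) * w).re ≤ w.re) : w ∈ sector ω := by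
  simp only [Complex.mul_re, exp_ofReal_mul_I_re, exp_ofReal_mul_I_im, Real.cos_neg,
    Real.sin_neg] at hup hdn
  simp only [sector, Set.mem_ofPred_eq]
  exact abs_le.mpr ⟨by linarith, by linarith⟩

lemma abs_arg_le_of_mem_sector {ω : ℝ} (hω0 : 0 < ω) (hωπ : ω ≤ π) {w : ℂ}
    (hw : w ∈ sector ω) : |arg w| ≤ ω / 2 := by
  rcases eq_or_ne w 0 with rfl | hw0
  · simp only [arg_zero, abs_zero]; positivity
  set x := |arg w|
  have hxπ : x ≤ π := abs_arg_le_pi w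
  have hnorm : 0 < ‖w‖ := norm_pos_iff.mpr hw0
  -- in polar form, membership in the sector reads `cos (ω - x) ≤ cos x`
  have hcos : Real.cos (ω - x) ≤ Real.cos x := by
    have hre : w.re = ‖w‖ * Real.cos x := by rw [Real.cos_abs, norm_mul_cos_arg]
    have him : |w.im| = ‖w‖ * Real.sin x := by
      rw [← norm_mul_sin_arg, abs_mul, abs_of_pos hnorm, abs_sin_eq_sin_abs_of_abs_le_pi hxπ]
    have hw' : Real.sin ω * |w.im| ≤ (1 - Real.cos ω) * w.re := by
      rwa [← abs_of_nonneg (Real.sin_nonneg_of_nonneg_of_le_pi hω0.le hωπ), ← abs_mul]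
    rw [hre, him] at hw'
    rw [Real.cos_sub]
    nlinarith
  have hx : x ≤ |ω - x| := by
    rw [← Real.cos_abs (ω - x)] at hcos
    by_contra! hlt
    exact (Real.cos_lt_cos_of_nonneg_of_le_pi (abs_nonneg _) hxπ hlt).not_ge hcos
  rcases abs_cases (ω - x) with ⟨h, -⟩ | ⟨h, -⟩ <;> linarith [abs_nonneg (arg w)]

lemma abs_arg_mul_exp_neg_le {β α ω : ℝ} (hβ : 0 < β) (hω0 : 0 < ω) (hωπ : ω ≤ π) {r : ℂ}
    (hup : ‖β * exp (α * I) + exp (ω * I) * r‖ ≤ ‖β * exp (α * I) + r‖)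
    (hdn : ‖β * exp (α * I) + exp (↑(-ω) * I) * r‖ ≤ ‖β * exp (α * I) + r‖) :
    |arg ((β * exp (α * I) + r) * exp (↑(-α) * I))| ≤ ω / 2 := by
  have hcancel : exp (α * I) * exp (↑(-α) * I) = 1 := by
    rw [← Complex.exp_add]; push_cast; simp
  have hrotate : ∀ e, (β * exp (α * I) + e * r) * exp (↑(-α) * I) =
      β + e * (r * exp (↑(-α) * I)) := fun e => by linear_combination (β : ℂ) * hcancel
  have hnorm : ∀ e, ‖β * exp (α * I) + e * r‖ = ‖(β : ℂ) + e * (r * exp (↑(-α) * I))‖ :=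
    fun e => by rw [← hrotate, norm_mul, norm_exp_ofReal_mul_I, mul_one]
  have hunit : ∀ τ : ℝ, ‖exp (τ * I) * (r * exp (↑(-α) * I))‖ = ‖r * exp (↑(-α) * I)‖ :=
    fun τ => by rw [norm_mul, norm_exp_ofReal_mul_I, one_mul]
  have hrotate₁ := hrotate 1
  have hnorm₁ := hnorm 1
  simp only [one_mul] at hrotate₁ hnorm₁
  rw [hnorm, hnorm₁] at hup hdn
  rw [hrotate₁]
  exact abs_arg_le_of_mem_sector hω0 hωπ <| add_mem_sector (ofReal_mem_sector ω hβ.le) <|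
    mem_sector_of_re_le (re_le_re_of_norm_ofReal_add_le hβ (hunit ω) hup)
      (re_le_re_of_norm_ofReal_add_le hβ (hunit _) hdn)

lemma norm_add_exp_mul_sum_le {K N : ℕ} (hK : 0 < K) (a : ℂ) (c : Fin N → ℂ)
    {θs : Fin N → ℝ} (hθs : ∀ n, θs n ∈ Phi K)
    (hmax : ∀ θ : Fin N → ℝ, (∀ n, θ n ∈ Phi K) →
      ‖a + ∑ n, c n * exp (θ n * I)‖ ≤ ‖a + ∑ n, c n * exp (θs n * I)‖) (j : ℤ) :
    ‖a + exp (↑(j * (2 * π / K)) * I) * ∑ n, c n * exp (θs n * I)‖ ≤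
      ‖a + ∑ n, c n * exp (θs n * I)‖ := by
  choose θ hθ hexp using fun n => exists_mem_Phi_exp_eq_exp_mul hK (hθs n) j
  convert hmax θ hθ using 3
  rw [Finset.mul_sum]
  exact Finset.sum_congr rfl fun n _ => by rw [hexp]; ring

theorem stmt_10 (K N : ℕ) (hK : 2 ≤ K) (β α : Fin (N + 1) → ℝ) (hβ : ∀ n, 0 < β n)
    (h : Fin (N + 1) → ℂ)
    (hh : ∀ n, h n = (β n : ℂ) * Complex.exp ((α n : ℂ) * Complex.I))
    (θs : Fin N → ℝ) (hθs : ∀ n, θs n ∈ Phi K)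
    (hmax : ∀ θ : Fin N → ℝ, (∀ n, θ n ∈ Phi K) →
      ‖h 0 + ∑ n : Fin N, h n.succ * Complex.exp (θ n * Complex.I)‖
        ≤ ‖h 0 + ∑ n : Fin N, h n.succ * Complex.exp (θs n * Complex.I)‖)
    (g : ℂ) (hg : g = h 0 + ∑ n : Fin N, h n.succ * Complex.exp (θs n * Complex.I))
    (hg0 : g ≠ 0) :
    cdist g.arg (α 0) < 2 * π / K := by
  have hω0 : 0 < 2 * π / K := by positivity
  have hωπ : 2 * π / K ≤ π := by
    calc 2 * π / K ≤ 2 * π / 2 :=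
          div_le_div_of_nonneg_left (by positivity) two_pos (by exact_mod_cast hK)
      _ = π := by ring
  have hrot := norm_add_exp_mul_sum_le (by omega) (h 0) (fun n => h n.succ) hθs hmax
  have hsector : |arg (g * exp (↑(-α 0) * I))| ≤ 2 * π / K / 2 := by
    rw [hh 0] at hrot
    rw [hg, hh 0]
    exact abs_arg_mul_exp_neg_le (hβ 0) hω0 hωπ (by simpa using hrot 1) (by simpa using hrot (-1))
  calc cdist g.arg (α 0) ≤ |arg (g * exp (↑(-α 0) * I))| :=
        cdist_le_abs_of_coe_eq (coe_arg_mul_exp_neg hg0 _)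
    _ ≤ 2 * π / K / 2 := hsector
    _ < 2 * π / K := half_lt_self hω0
end

section
/- Let $h_n = \beta_n e^{i\alpha_n}$ with $\beta_n > 0$ for $n = 0, \ldots, N$ and let $\theta_n^{CPP} \in \Phi_K$ be chosen so that $d(\theta_n^{CPP} + \alpha_n, \alpha_0) \leq \pi/K$ for each $n$ (closest point projection toward $h_0$). Then $|h_0 + \sum_{n=1}^N h_n e^{i\theta_n^{CPP}}| \geq \beta_0 + \cos(\pi/K) \sum_{n=1}^N \beta_n$, and hence $|h_0 + \sum_n h_n e^{i\theta_n^{CPP}}|^2 \geq \cos^2(\pi/K) \cdot (\sum_{n=0}^N \beta_n)^2 \geq \cos^2(\pi/K) \cdot \max_{\theta \in \Phi_K^N} |h_0 + \sum_n h_n e^{i\theta_n}|^2$. -/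
open Real Complex

/-!
Rotating the combined sum by `exp (-α 0 * I)` does not change its modulus, and the real part of
the rotated sum is `β 0 + ∑ β (n + 1) * cos (θ n + α (n + 1) - α 0)`. Closest point projection
makes each of these cosines at least `cos (π / K)`, and the real part is at most the modulus.
On the other hand every choice of phases gives modulus at most `∑ β n` by the triangle inequality.
-/

theorem cdist_eq_norm_coe (x y : ℝ) : cdist x y = ‖((x - y : ℝ) : AddCircle (2 * π))‖ := by
  apply le_antisymm
  · refine csInf_le ⟨0, by rintro t ⟨m, rfl⟩; positivity⟩ ⟨-round ((2 * π)⁻¹ * (x - y)), ?_⟩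
    rw [AddCircle.norm_eq]
    push_cast
    ring_nf
  · refine le_csInf (Set.range_nonempty _) ?_
    rintro t ⟨m, rfl⟩
    have hperiod : ((2 * π * m : ℝ) : AddCircle (2 * π)) = 0 :=
      (AddCircle.coe_eq_zero_iff _).2 ⟨m, by rw [zsmul_eq_mul, mul_comm]⟩
    have hcoe : ((x - y + 2 * π * m : ℝ) : AddCircle (2 * π)) = ((x - y : ℝ) : AddCircle (2 * π)) := by
      rw [AddCircle.coe_add, hperiod, add_zero]
    simpa [hcoe] using
      QuotientAddGroup.norm_mk_le_norm (S := AddSubgroup.zmultiples (2 * π)) (m := x - y + 2 * π * m)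

theorem cos_norm_coe_addCircle (x : ℝ) : Real.cos ‖(x : AddCircle (2 * π))‖ = Real.cos x := by
  rw [AddCircle.norm_eq, Real.cos_abs, Real.cos_sub_int_mul_two_pi]

theorem cos_le_cos_sub_of_cdist_le {x y c : ℝ} (hc : c ≤ π) (h : cdist x y ≤ c) :
    Real.cos c ≤ Real.cos (x - y) := by
  rw [← cos_norm_coe_addCircle (x - y), ← cdist_eq_norm_coe]
  exact Real.cos_le_cos_of_nonneg_of_le_pi ((cdist_eq_norm_coe x y).symm ▸ norm_nonneg _) hc h

theorem sum_mul_cos_sub_le_norm_sum {ι : Type*} (s : Finset ι) (β φ : ι → ℝ) (ψ : ℝ) :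
    ∑ i ∈ s, β i * Real.cos (φ i - ψ) ≤ ‖∑ i ∈ s, (β i : ℂ) * Complex.exp (φ i * I)‖ := by
  have hre : (Complex.exp (-ψ * I) * ∑ i ∈ s, (β i : ℂ) * Complex.exp (φ i * I)).re
      = ∑ i ∈ s, β i * Real.cos (φ i - ψ) := by
    rw [Finset.mul_sum, Complex.re_sum]
    refine Finset.sum_congr rfl fun i _ => ?_
    rw [mul_left_comm, ← Complex.exp_add, show -ψ * I + φ i * I = ((φ i - ψ : ℝ) : ℂ) * I by
      push_cast; ring, Complex.re_ofReal_mul, Complex.exp_ofReal_mul_I_re]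
  calc ∑ i ∈ s, β i * Real.cos (φ i - ψ)
      = (Complex.exp (-ψ * I) * ∑ i ∈ s, (β i : ℂ) * Complex.exp (φ i * I)).re := hre.symm
    _ ≤ ‖Complex.exp (-ψ * I) * ∑ i ∈ s, (β i : ℂ) * Complex.exp (φ i * I)‖ := Complex.re_le_norm _
    _ = ‖∑ i ∈ s, (β i : ℂ) * Complex.exp (φ i * I)‖ := by
      rw [norm_mul, ← Complex.ofReal_neg, Complex.norm_exp_ofReal_mul_I, one_mul]

theorem norm_sum_mul_exp_le_sum {ι : Type*} (s : Finset ι) {β : ι → ℝ} (hβ : ∀ i ∈ s, 0 ≤ β i)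
    (φ : ι → ℝ) : ‖∑ i ∈ s, (β i : ℂ) * Complex.exp (φ i * I)‖ ≤ ∑ i ∈ s, β i := by
  refine (norm_sum_le _ _).trans_eq (Finset.sum_congr rfl fun i hi => ?_)
  rw [norm_mul, Complex.norm_exp_ofReal_mul_I, mul_one, Complex.norm_real, Real.norm_of_nonneg (hβ i hi)]

theorem cos_pi_div_natCast_nonneg {K : ℕ} (hK : 2 ≤ K) : 0 ≤ Real.cos (π / K) := by
  have hπK : π / K ≤ π / 2 := div_le_div_of_nonneg_left pi_pos.le two_pos (by exact_mod_cast hK)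
  exact Real.cos_nonneg_of_mem_Icc ⟨by linarith [div_nonneg pi_pos.le (Nat.cast_nonneg K)], hπK⟩

theorem add_sum_mul_exp_eq_sum_cons {N : ℕ} {β α : Fin (N + 1) → ℝ} {h : Fin (N + 1) → ℂ}
    (hh : ∀ n, h n = (β n : ℂ) * Complex.exp ((α n : ℂ) * I)) (θ : Fin N → ℝ) :
    h 0 + ∑ n : Fin N, h n.succ * Complex.exp (θ n * I)
      = ∑ n, (β n : ℂ) *
          Complex.exp ((Fin.cons (α 0) fun n => θ n + α n.succ : Fin (N + 1) → ℝ) n * I) := by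
  rw [Fin.sum_univ_succ, hh]
  refine congrArg _ (Finset.sum_congr rfl fun n _ => ?_)
  simp only [Fin.cons_succ, hh, Complex.ofReal_add, add_mul, Complex.exp_add]
  ring

theorem stmt_12_general (K N : ℕ) (hK : 2 ≤ K) (β α : Fin (N + 1) → ℝ) (hβ : ∀ n, 0 < β n)
    (h : Fin (N + 1) → ℂ)
    (hh : ∀ n, h n = (β n : ℂ) * Complex.exp ((α n : ℂ) * Complex.I))
    (θc : Fin N → ℝ)
    (hcpp : ∀ n : Fin N, cdist (θc n + α n.succ) (α 0) ≤ π / K) :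
    β 0 + Real.cos (π / K) * ∑ n : Fin N, β n.succ
        ≤ ‖h 0 + ∑ n : Fin N, h n.succ * Complex.exp (θc n * Complex.I)‖ ∧
    Real.cos (π / K) ^ 2 * (∑ n, β n) ^ 2
        ≤ ‖h 0 + ∑ n : Fin N, h n.succ * Complex.exp (θc n * Complex.I)‖ ^ 2 ∧
    ∀ θ : Fin N → ℝ, (∀ n, θ n ∈ Phi K) →
      Real.cos (π / K) ^ 2 *
          ‖h 0 + ∑ n : Fin N, h n.succ * Complex.exp (θ n * Complex.I)‖ ^ 2
        ≤ ‖h 0 + ∑ n : Fin N, h n.succ * Complex.exp (θc n * Complex.I)‖ ^ 2 := by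
  have hcos := cos_pi_div_natCast_nonneg hK
  have lower : β 0 + Real.cos (π / K) * ∑ n : Fin N, β n.succ
      ≤ ‖h 0 + ∑ n : Fin N, h n.succ * Complex.exp (θc n * Complex.I)‖ := by
    rw [add_sum_mul_exp_eq_sum_cons hh]
    refine le_trans ?_ (sum_mul_cos_sub_le_norm_sum _ β _ (α 0))
    rw [Fin.sum_univ_succ, Finset.mul_sum]
    simp only [Fin.cons_zero, Fin.cons_succ, sub_self, Real.cos_zero, mul_one]
    refine add_le_add_right (Finset.sum_le_sum fun n _ => ?_) (β 0)
    rw [mul_comm]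
    exact mul_le_mul_of_nonneg_left
      (cos_le_cos_sub_of_cdist_le (div_le_self pi_pos.le (by exact_mod_cast (by omega : 1 ≤ K)))
        (hcpp n)) (hβ _).le
  have upper (θ : Fin N → ℝ) : ‖h 0 + ∑ n : Fin N, h n.succ * Complex.exp (θ n * Complex.I)‖
      ≤ ∑ n, β n := by
    rw [add_sum_mul_exp_eq_sum_cons hh]
    exact norm_sum_mul_exp_le_sum _ (fun n _ => (hβ n).le) _
  have middle : Real.cos (π / K) * ∑ n, β n ≤ β 0 + Real.cos (π / K) * ∑ n : Fin N, β n.succ := by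
    rw [Fin.sum_univ_succ, mul_add]
    exact add_le_add_left (mul_le_of_le_one_left (hβ 0).le (Real.cos_le_one _)) _
  have squared := pow_le_pow_left₀
    (mul_nonneg hcos (Finset.sum_nonneg fun n _ => (hβ n).le)) (middle.trans lower) 2
  refine ⟨lower, by rwa [mul_pow] at squared, fun θ _ => ?_⟩
  rw [← mul_pow]
  exact (pow_le_pow_left₀ (by positivity) (mul_le_mul_of_nonneg_left (upper θ) hcos) 2).trans squared

theorem stmt_12 (K N : ℕ) (hK : 2 ≤ K) (β α : Fin (N + 1) → ℝ) (hβ : ∀ n, 0 < β n)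
    (h : Fin (N + 1) → ℂ)
    (hh : ∀ n, h n = (β n : ℂ) * Complex.exp ((α n : ℂ) * Complex.I))
    (θc : Fin N → ℝ) (hθc : ∀ n, θc n ∈ Phi K)
    (hcpp : ∀ n : Fin N, cdist (θc n + α n.succ) (α 0) ≤ π / K) :
    β 0 + Real.cos (π / K) * ∑ n : Fin N, β n.succ
        ≤ ‖h 0 + ∑ n : Fin N, h n.succ * Complex.exp (θc n * Complex.I)‖ ∧
    Real.cos (π / K) ^ 2 * (∑ n, β n) ^ 2
        ≤ ‖h 0 + ∑ n : Fin N, h n.succ * Complex.exp (θc n * Complex.I)‖ ^ 2 ∧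
    ∀ θ : Fin N → ℝ, (∀ n, θ n ∈ Phi K) →
      Real.cos (π / K) ^ 2 *
          ‖h 0 + ∑ n : Fin N, h n.succ * Complex.exp (θ n * Complex.I)‖ ^ 2
        ≤ ‖h 0 + ∑ n : Fin N, h n.succ * Complex.exp (θc n * Complex.I)‖ ^ 2 :=
  stmt_12_general K N hK β α hβ h hh θc hcpp
end

section
/- Let $\lambda_1 < \cdots < \lambda_L$ in $[0, 2\pi)$ be the distinct sorted values of $\{(\alpha_n + (k-0.5)\omega) \bmod 2\pi : n \leq N, k \leq K\}$, and for each $\ell$ let $\theta^{(\ell)} = (\theta_1^{(\ell)}, \ldots, \theta_N^{(\ell)})$ be the configuration induced by any $\mu$ with $\angle\mu$ in the open arc $(\lambda_\ell, \lambda_{\ell+1})$ (indices mod $L$), i.e., $\theta_n^{(\ell)} = \arg\min_{\theta \in \Phi_K} d(\theta + \alpha_n, \angle\mu)$. Then the global maximum of $|h_0 + \sum_n h_n e^{i\theta_n}|$ over $\Phi_K^N$ equals $\max_{1 \leq \ell \leq L} |h_0 + \sum_n h_n e^{i\theta_n^{(\ell)}}|$. -/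
open Real Complex

/-!
Let `θ` maximise `‖S θ‖` over `Φ_K^N`, where `S θ = h₀ + ∑ hₙ e^{iθₙ}`, and take
`μ = e^{i arg S}`. Moving the single coordinate `θₙ` to `x ∈ Φ_K` adds `D = hₙ (e^{ix} - e^{iθₙ})`
to `S`, so maximality gives `2⟪S, D⟫ + ‖D‖² ≤ 0`, while
`⟪S, D⟫ = βₙ ‖S‖ (cos (x + αₙ - arg S) - cos (θₙ + αₙ - arg S))`.
Hence no grid point is closer to `arg S - αₙ` than `θₙ`, and one that is equally close coincides
with `θₙ` modulo `2π`. If `arg μ` were a midpoint `αₙ + (k - 1/2) ω`, its two neighbouring grid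
points would both be at distance `ω / 2`, the least possible, so both would coincide with `θₙ`.
-/

lemma abs_le_abs_add_two_pi_mul_int {t : ℝ} (ht : |t| ≤ π) (j : ℤ) : |t| ≤ |t + 2 * π * j| := by
  rcases eq_or_ne j 0 with rfl | hj
  · simp
  have h2pi : 2 * π ≤ |2 * π * j| := by
    rw [abs_mul, abs_of_pos two_pi_pos]
    exact le_mul_of_one_le_right two_pi_pos.le (by exact_mod_cast Int.one_le_abs hj)
  have htri := abs_sub_abs_le_abs_sub (2 * π * j) (-t)
  rw [abs_neg, sub_neg_eq_add, add_comm] at htri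
  linarith

lemma cdist_eq_abs_toReal (x y : ℝ) : cdist x y = |((x - y : ℝ) : Real.Angle).toReal| := by
  obtain ⟨k, hk⟩ := Real.Angle.angle_eq_iff_two_pi_dvd_sub.1
    (Real.Angle.coe_toReal ((x - y : ℝ) : Real.Angle))
  refine IsLeast.csInf_eq ⟨⟨k, congrArg _ (by linarith)⟩, ?_⟩
  rintro _ ⟨m, rfl⟩
  have hshift : ((x - y : ℝ) : Real.Angle).toReal + 2 * π * ((m - k : ℤ) : ℝ)
      = x - y + 2 * π * m := by
    push_cast
    linarith
  simpa only [hshift] using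
    abs_le_abs_add_two_pi_mul_int (Real.Angle.abs_toReal_le_pi ((x - y : ℝ) : Real.Angle)) (m - k)

lemma cdist_eq_arccos_cos (x y : ℝ) : cdist x y = arccos (cos (x - y)) := by
  rw [cdist_eq_abs_toReal, ← Real.Angle.cos_coe, ← Real.Angle.cos_toReal, ← Real.cos_abs,
    arccos_cos (abs_nonneg _) (Real.Angle.abs_toReal_le_pi _)]

lemma exp_mul_I_eq_exp_mul_I_iff {x y : ℝ} :
    exp (x * I) = exp (y * I) ↔ ∃ m : ℤ, x = y + m * (2 * π) := by
  rw [exp_eq_exp_iff_exists_int]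
  refine exists_congr fun m => ⟨fun h => by simpa using congrArg im h, fun h => ?_⟩
  rw [h]
  push_cast
  ring

lemma ne_int_mul_two_pi_of_pos_of_lt {ω : ℝ} (h0 : 0 < ω) (h1 : ω < 2 * π) (m : ℤ) :
    ω ≠ m * (2 * π) := by
  rintro rfl
  have hm0 : (0 : ℝ) < m := pos_of_mul_pos_left h0 two_pi_pos.le
  have hm1 : (m : ℝ) < 1 := by nlinarith [two_pi_pos]
  norm_cast at hm0 hm1
  omega

lemma cos_int_add_half_mul_le {K : ℕ} (hK : 0 < K) (t : ℤ) :
    Real.cos ((t + 1 / 2) * (2 * π / K)) ≤ Real.cos ((2 * π / K) / 2) := by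
  set ω := 2 * π / K with hω
  have hω0 : 0 < ω := by positivity
  have hKω : (K : ℝ) * ω = 2 * π := by rw [hω]; field_simp
  have hle : ω / 2 ≤ cdist ((t + 1 / 2) * ω) 0 := by
    refine le_csInf (Set.range_nonempty _) ?_
    rintro _ ⟨m, rfl⟩
    have hodd : (1 : ℝ) ≤ |2 * ((t + K * m : ℤ) : ℝ) + 1| := by
      exact_mod_cast Int.one_le_abs (by omega)
    have hrep : (t + 1 / 2) * ω - 0 + 2 * π * m = (2 * ((t + K * m : ℤ) : ℝ) + 1) * (ω / 2) := by
      rw [← hKω]; push_cast; ring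
    show _ ≤ |_|
    rw [hrep, abs_mul, abs_of_pos (half_pos hω0)]
    nlinarith
  rw [cdist_eq_arccos_cos, sub_zero] at hle
  calc Real.cos ((t + 1 / 2) * ω) = Real.cos (arccos (Real.cos ((t + 1 / 2) * ω))) :=
        (cos_arccos (neg_one_le_cos _) (cos_le_one _)).symm
    _ ≤ Real.cos (ω / 2) := cos_le_cos_of_nonneg_of_le_pi (half_pos hω0).le (arccos_le_pi _) hle

lemma finite_Phi (K : ℕ) : (Phi K).Finite :=
  ((Set.finite_Icc 1 K).image fun k : ℕ => (k : ℝ) * (2 * π / K)).subset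
    fun _ ⟨k, hk1, hkK, hθ⟩ => ⟨k, ⟨hk1, hkK⟩, hθ.symm⟩

lemma exists_mem_Phi_eq_add_int_mul_two_pi {K : ℕ} (hK : 0 < K) (j : ℤ) :
    ∃ x ∈ Phi K, ∃ m : ℤ, x = j * (2 * π / K) + m * (2 * π) := by
  have hr := Int.emod_nonneg (j - 1) (by omega : (K : ℤ) ≠ 0)
  have hrK := Int.emod_lt_of_pos (j - 1) (by omega : (0 : ℤ) < K)
  have hdiv := Int.emod_add_mul_ediv (j - 1) K
  refine ⟨((j - 1) % K).toNat.succ * (2 * π / K), ⟨_, by omega, by omega, rfl⟩,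
    -((j - 1) / K), ?_⟩
  have : ((((j - 1) % K).toNat.succ : ℕ) : ℝ) = j - K * ((j - 1) / K : ℤ) := by
    rw [Nat.cast_succ, ← Int.cast_natCast, Int.toNat_of_nonneg hr]
    have : ((j - 1) % K + K * ((j - 1) / K) : ℤ) = (j - 1 : ℤ) := hdiv
    have := congrArg (fun z : ℤ => (z : ℝ)) this
    push_cast at this ⊢
    linarith
  rw [this]
  field_simp
  push_cast
  ring

lemma two_mul_inner_add_sq_norm_nonpos {E : Type*} [NormedAddCommGroup E] [InnerProductSpace ℝ E]
    {x y : E} (h : ‖x + y‖ ≤ ‖x‖) : 2 * inner ℝ x y + ‖y‖ ^ 2 ≤ 0 := by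
  have := norm_add_sq_real x y
  have := pow_le_pow_left₀ (norm_nonneg _) h 2
  linarith

lemma inner_ofReal_mul_exp_mul_I (S : ℂ) (b θ : ℝ) :
    inner ℝ S (b * exp (θ * I)) = b * ‖S‖ * Real.cos (θ - S.arg) := by
  rw [Complex.inner]
  simp only [mul_re, mul_im, conj_re, conj_im, ofReal_re, ofReal_im, exp_ofReal_mul_I_re,
    exp_ofReal_mul_I_im]
  rw [Real.cos_sub, ← norm_mul_cos_arg S, ← norm_mul_sin_arg S]
  ring

noncomputable def phaseSum {N : ℕ} (c : ℂ) (g : Fin N → ℂ) (θ : Fin N → ℝ) : ℂ :=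
  c + ∑ n, g n * exp (θ n * I)

lemma phaseSum_update {N : ℕ} (c : ℂ) (g : Fin N → ℂ) (θ : Fin N → ℝ) (n : Fin N) (x : ℝ) :
    phaseSum c g (Function.update θ n x)
      = phaseSum c g θ + g n * (exp (x * I) - exp (θ n * I)) := by
  have hterm : ∀ m, g m * exp (Function.update θ n x m * I)
      = g m * exp (θ m * I) + if m = n then g n * (exp (x * I) - exp (θ n * I)) else 0 := by
    intro m
    rcases eq_or_ne m n with rfl | hm
    · simp only [Function.update_self, if_true]
      ring
    · simp [hm]
  simp only [phaseSum, hterm, Finset.sum_add_distrib, Finset.sum_ite_eq', Finset.mem_univ, if_true]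
  ring

section Maximizer

variable {N : ℕ} {Φ : Set ℝ} {c : ℂ} {g : Fin N → ℂ} {θ : Fin N → ℝ}

lemma exp_mul_I_eq_of_cos_le (hθ : ∀ n, θ n ∈ Φ)
    (hmax : IsMaxOn (fun θ => ‖phaseSum c g θ‖) (Set.univ.pi fun _ => Φ) θ)
    {n : Fin N} {β α x : ℝ} (hβ : 0 < β) (hg : g n = β * exp (α * I)) (hx : x ∈ Φ)
    (hcos : Real.cos (θ n + α - (phaseSum c g θ).arg)
      ≤ Real.cos (x + α - (phaseSum c g θ).arg)) :
    exp (x * I) = exp (θ n * I) := by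
  set S := phaseSum c g θ
  set D := g n * (exp (x * I) - exp (θ n * I))
  have hexch : ‖S + D‖ ≤ ‖S‖ := by
    rw [← phaseSum_update]
    refine hmax fun m _ => ?_
    rcases eq_or_ne m n with rfl | hm
    · simpa using hx
    · simpa [hm] using hθ m
  have hinner : inner ℝ S D
      = β * ‖S‖ * (Real.cos (x + α - S.arg) - Real.cos (θ n + α - S.arg)) := by
    have : D = β * exp ((x + α : ℝ) * I) - β * exp ((θ n + α : ℝ) * I) := by
      simp only [D, hg, ofReal_add, add_mul, Complex.exp_add]
      ring
    rw [this, inner_sub_right, inner_ofReal_mul_exp_mul_I, inner_ofReal_mul_exp_mul_I]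
    ring
  have hD : D = 0 := by
    have hnonneg : 0 ≤ inner ℝ S D := hinner ▸ mul_nonneg (by positivity) (sub_nonneg.2 hcos)
    have hsq : ‖D‖ ^ 2 = 0 :=
      le_antisymm (by linarith [two_mul_inner_add_sq_norm_nonpos hexch]) (sq_nonneg _)
    exact norm_eq_zero.1 (pow_eq_zero_iff two_ne_zero |>.1 hsq)
  have hgn : g n ≠ 0 := hg ▸ mul_ne_zero (ofReal_ne_zero.2 hβ.ne') (exp_ne_zero _)
  exact sub_eq_zero.1 ((mul_eq_zero.1 hD).resolve_left hgn)

lemma cos_le_of_isMaxOn (hθ : ∀ n, θ n ∈ Φ)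
    (hmax : IsMaxOn (fun θ => ‖phaseSum c g θ‖) (Set.univ.pi fun _ => Φ) θ)
    {n : Fin N} {β α x : ℝ} (hβ : 0 < β) (hg : g n = β * exp (α * I)) (hx : x ∈ Φ) :
    Real.cos (x + α - (phaseSum c g θ).arg) ≤ Real.cos (θ n + α - (phaseSum c g θ).arg) := by
  by_contra! hlt
  obtain ⟨m, hm⟩ := exp_mul_I_eq_exp_mul_I_iff.1 (exp_mul_I_eq_of_cos_le hθ hmax hβ hg hx hlt.le)
  rw [hm, show θ n + m * (2 * π) + α - (phaseSum c g θ).arg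
    = θ n + α - (phaseSum c g θ).arg + m * (2 * π) by ring, Real.cos_add_int_mul_two_pi] at hlt
  exact lt_irrefl _ hlt

lemma exp_arg_mul_I_ne_midpoint {K : ℕ} (hK : 2 ≤ K) (hθ : ∀ n, θ n ∈ Phi K)
    (hmax : IsMaxOn (fun θ => ‖phaseSum c g θ‖) (Set.univ.pi fun _ => Phi K) θ)
    {n : Fin N} {β α : ℝ} (hβ : 0 < β) (hg : g n = β * exp (α * I)) (k : ℤ) :
    exp ((phaseSum c g θ).arg * I) ≠ exp ((α + (k - 1 / 2) * (2 * π / K) : ℝ) * I) := by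
  set ω := 2 * π / K with hω
  set a := (phaseSum c g θ).arg
  have hω0 : 0 < ω := by positivity
  have hω2π : ω < 2 * π := by
    have : (2 : ℝ) ≤ K := by exact_mod_cast hK
    rw [hω, div_lt_iff₀ (by positivity)]
    nlinarith [pi_pos]
  intro heq
  obtain ⟨m, hm⟩ := exp_mul_I_eq_exp_mul_I_iff.1 heq
  obtain ⟨x₁, hx₁, m₁, hx₁m⟩ := exists_mem_Phi_eq_add_int_mul_two_pi (K := K) (by omega) k
  obtain ⟨x₂, hx₂, m₂, hx₂m⟩ := exists_mem_Phi_eq_add_int_mul_two_pi (K := K) (by omega) (k - 1)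
  obtain ⟨j, -, -, hj⟩ := hθ n
  have hθcos : Real.cos (θ n + α - a) ≤ Real.cos (ω / 2) := by
    rw [hj, hm, show (j : ℝ) * ω + α - (α + (k - 1 / 2) * ω + m * (2 * π))
      = ((j - k : ℤ) + 1 / 2) * ω + (-m : ℤ) * (2 * π) by push_cast; ring,
      Real.cos_add_int_mul_two_pi]
    exact cos_int_add_half_mul_le (by omega) _
  have h₁ : Real.cos (θ n + α - a) ≤ Real.cos (x₁ + α - a) := by
    rwa [show x₁ + α - a = ω / 2 + (m₁ - m : ℤ) * (2 * π) by rw [hx₁m, hm]; push_cast; ring,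
      Real.cos_add_int_mul_two_pi]
  have h₂ : Real.cos (θ n + α - a) ≤ Real.cos (x₂ + α - a) := by
    rwa [show x₂ + α - a = -(ω / 2) + (m₂ - m : ℤ) * (2 * π) by rw [hx₂m, hm]; push_cast; ring,
      Real.cos_add_int_mul_two_pi, Real.cos_neg]
  obtain ⟨p₁, hp₁⟩ := exp_mul_I_eq_exp_mul_I_iff.1 (exp_mul_I_eq_of_cos_le hθ hmax hβ hg hx₁ h₁)
  obtain ⟨p₂, hp₂⟩ := exp_mul_I_eq_exp_mul_I_iff.1 (exp_mul_I_eq_of_cos_le hθ hmax hβ hg hx₂ h₂)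
  rw [hx₁m] at hp₁
  rw [hx₂m] at hp₂
  push_cast at hp₁ hp₂
  exact ne_int_mul_two_pi_of_pos_of_lt hω0 hω2π (p₁ - p₂ - m₁ + m₂) (by push_cast; linarith)

end Maximizer

theorem stmt_14 (K N : ℕ) (hK : 2 ≤ K) (ω : ℝ) (hω : ω = 2 * π / K)
    (β α : Fin (N + 1) → ℝ) (hβ : ∀ n, 0 < β n)
    (h : Fin (N + 1) → ℂ)
    (hh : ∀ n, h n = (β n : ℂ) * Complex.exp ((α n : ℂ) * Complex.I)) :
    ∃ θs : Fin N → ℝ, (∀ n, θs n ∈ Phi K) ∧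
      (∀ θ : Fin N → ℝ, (∀ n, θ n ∈ Phi K) →
        ‖h 0 + ∑ n : Fin N, h n.succ * Complex.exp (θ n * Complex.I)‖
          ≤ ‖h 0 + ∑ n : Fin N, h n.succ * Complex.exp (θs n * Complex.I)‖) ∧
      ∃ μ : ℂ, μ ≠ 0 ∧ ‖μ‖ = 1 ∧
        (∀ (n : Fin N) (k : ℕ), 1 ≤ k → k ≤ K →
          μ ≠ Complex.exp ((↑(α n.succ + ((k : ℝ) - 0.5) * ω)) * Complex.I)) ∧
        ∀ n : Fin N, ∀ θ ∈ Phi K,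
          cdist (θs n + α n.succ) μ.arg ≤ cdist (θ + α n.succ) μ.arg := by
  subst hω
  set g : Fin N → ℂ := fun n => h n.succ
  have hg : ∀ n, g n = β n.succ * exp (α n.succ * I) := fun n => hh n.succ
  have hΦ : (1 : ℕ) * (2 * π / K) ∈ Phi K := ⟨1, le_rfl, by omega, rfl⟩
  obtain ⟨θs, hmem, hmax⟩ := Set.exists_max_image (Set.univ.pi fun _ => Phi K)
    (fun θ => ‖phaseSum (h 0) g θ‖) (Set.Finite.pi fun _ => finite_Phi K) ⟨_, fun _ _ => hΦ⟩
  have hθs : ∀ n, θs n ∈ Phi K := fun n => hmem n (Set.mem_univ n)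
  replace hmax := isMaxOn_iff.2 hmax
  set a := (phaseSum (h 0) g θs).arg
  have ha : (exp (a * I)).arg = a := by
    rw [arg_exp_mul_I, toIocMod_eq_self]
    exact ⟨neg_pi_lt_arg _, by linarith [arg_le_pi (phaseSum (h 0) g θs)]⟩
  refine ⟨θs, hθs, fun θ hθ => hmax fun n _ => hθ n, exp (a * I), exp_ne_zero _,
    norm_exp_ofReal_mul_I a, fun n k _ _ => ?_, fun n x hx => ?_⟩
  · convert exp_arg_mul_I_ne_midpoint hK hθs hmax (hβ n.succ) (hg n) k using 4
    push_cast
    norm_num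
  · rw [ha, cdist_eq_arccos_cos, cdist_eq_arccos_cos]
    exact arccos_le_arccos (cos_le_of_isMaxOn hθs hmax (hβ _) (hg n) hx)
end

section
/- For $N = 2$, $K = 2$ (binary phase shifts $\Phi_2 = \{\pi, 2\pi\}$), there exist channels $h_0, h_1, h_2$ such that the closest-point-projection (CPP) solution (each $\theta_n$ chosen to minimize $d(\theta_n + \alpha_n, \alpha_0)$) achieves a strictly smaller objective than the global optimum over $\Phi_2^2$, i.e. $|g_{CPP}| < |g^\star|$, where $g = h_0 + h_1 e^{i\theta_1} + h_2 e^{i\theta_2}$. -/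
open Real Complex

lemma cdist_le (x y : ℝ) (m : ℤ) : cdist x y ≤ |x - y + 2 * π * m| :=
  csInf_le ⟨0, by rintro r ⟨k, rfl⟩; positivity⟩ ⟨m, rfl⟩

lemma le_cdist {x y c : ℝ} (h : ∀ m : ℤ, c ≤ |x - y + 2 * π * m|) : c ≤ cdist x y := by
  apply le_csInf (Set.range_nonempty _)
  rintro r ⟨m, rfl⟩; exact h m

lemma cdist_ge (x r : ℝ) (j : ℤ) (h0 : 0 ≤ r) (hr : r ≤ π)
    (hx : x = 2*π*j + r ∨ x = 2*π*j - r) : r ≤ cdist x 0 := by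
  apply le_cdist
  intro m
  have hpi := Real.pi_pos
  have htri : j + m ≤ -1 ∨ j + m = 0 ∨ 1 ≤ j + m := by omega
  rcases htri with hk | hk | hk
  · have hk' : (j:ℝ) + m ≤ -1 := by exact_mod_cast hk
    rcases hx with rfl | rfl
    · rw [_root_.abs_of_nonpos (by nlinarith)]; nlinarith
    · rw [_root_.abs_of_nonpos (by nlinarith)]; nlinarith
  · have hk' : (j:ℝ) + m = 0 := by exact_mod_cast hk
    rcases hx with rfl | rfl
    · rw [show 2*π*(j:ℝ) + r - 0 + 2*π*m = 2*π*((j:ℝ)+m) + r by ring, hk', mul_zero,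
        zero_add, _root_.abs_of_nonneg h0]
    · rw [show 2*π*(j:ℝ) - r - 0 + 2*π*m = 2*π*((j:ℝ)+m) - r by ring, hk', mul_zero,
        zero_sub, abs_neg, _root_.abs_of_nonneg h0]
  · have hk' : (1:ℝ) ≤ (j:ℝ) + m := by exact_mod_cast hk
    rcases hx with rfl | rfl
    · rw [_root_.abs_of_nonneg (by nlinarith)]; nlinarith
    · rw [_root_.abs_of_nonneg (by nlinarith)]; nlinarith

lemma pi_mem_Phi2 : π ∈ Phi 2 := ⟨1, le_refl _, one_le_two, by push_cast; ring⟩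
lemma two_pi_mem_Phi2 : 2 * π ∈ Phi 2 := ⟨2, one_le_two, le_refl _, by push_cast; ring⟩

lemma Phi2_eq {θ : ℝ} (h : θ ∈ Phi 2) : θ = π ∨ θ = 2 * π := by
  obtain ⟨k, h1, h2, rfl⟩ := h
  interval_cases k
  · left; push_cast; ring
  · right; push_cast; ring

theorem stmt_16 :
    ∃ h : Fin 3 → ℂ, (∀ n, h n ≠ 0) ∧
      ∃ θc : Fin 2 → ℝ, (∀ n, θc n ∈ Phi 2) ∧
        (∀ n : Fin 2, ∀ θ ∈ Phi 2,
          cdist (θc n + (h n.succ).arg) (h 0).arg ≤ cdist (θ + (h n.succ).arg) (h 0).arg) ∧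
        ∃ θs : Fin 2 → ℝ, (∀ n, θs n ∈ Phi 2) ∧
          ‖h 0 + ∑ n : Fin 2, h n.succ * Complex.exp (θc n * Complex.I)‖
            < ‖h 0 + ∑ n : Fin 2, h n.succ * Complex.exp (θs n * Complex.I)‖ := by
  have hpi := Real.pi_pos
  refine ⟨![(((1:ℝ)/2 : ℝ) : ℂ), Complex.exp ((π/3 : ℝ) * I), Complex.exp ((2*π/3 : ℝ) * I)],
    ?_, ?_⟩
  · intro n
    fin_cases n
    · norm_num
    · exact Complex.exp_ne_zero _
    · exact Complex.exp_ne_zero _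
  have harg0 : Complex.arg ((((1:ℝ)/2 : ℝ) : ℂ)) = 0 :=
    Complex.arg_ofReal_of_nonneg (by norm_num)
  have harg1 : (Complex.exp ((π/3 : ℝ) * I)).arg = π/3 := by
    rw [Complex.exp_mul_I]
    exact Complex.arg_cos_add_sin_mul_I ⟨by linarith, by linarith⟩
  have harg2 : (Complex.exp ((2*π/3 : ℝ) * I)).arg = 2*π/3 := by
    rw [Complex.exp_mul_I]
    exact Complex.arg_cos_add_sin_mul_I ⟨by linarith, by linarith⟩
  refine ⟨![2*π, π], ?_, ?_, ?_⟩
  · intro n; fin_cases n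
    · exact two_pi_mem_Phi2
    · exact pi_mem_Phi2
  · intro n θ hθ
    fin_cases n
    · show cdist (2*π + (Complex.exp ((π/3 : ℝ) * I)).arg) (Complex.arg ((((1:ℝ)/2 : ℝ) : ℂ))) ≤
        cdist (θ + (Complex.exp ((π/3 : ℝ) * I)).arg) (Complex.arg ((((1:ℝ)/2 : ℝ) : ℂ)))
      rw [harg0, harg1]
      rcases Phi2_eq hθ with rfl | rfl
      · calc cdist (2*π + π/3) 0 ≤ |2*π + π/3 - 0 + 2*π*(-1 : ℤ)| := cdist_le _ _ _
          _ = π/3 := by push_cast; rw [_root_.abs_of_nonneg (by linarith)]; ring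
          _ ≤ 2*π/3 := by linarith
          _ ≤ cdist (π + π/3) 0 := cdist_ge _ _ 1 (by linarith) (by linarith)
              (Or.inr (by push_cast; ring))
      · exact le_refl _
    · show cdist (π + (Complex.exp ((2*π/3 : ℝ) * I)).arg) (Complex.arg ((((1:ℝ)/2 : ℝ) : ℂ))) ≤
        cdist (θ + (Complex.exp ((2*π/3 : ℝ) * I)).arg) (Complex.arg ((((1:ℝ)/2 : ℝ) : ℂ)))
      rw [harg0, harg2]
      rcases Phi2_eq hθ with rfl | rfl
      · exact le_refl _
      · calc cdist (π + 2*π/3) 0 ≤ |π + 2*π/3 - 0 + 2*π*(-1 : ℤ)| := cdist_le _ _ _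
          _ = π/3 := by push_cast; rw [_root_.abs_of_nonpos (by linarith)]; ring
          _ ≤ 2*π/3 := by linarith
          _ ≤ cdist (2*π + 2*π/3) 0 := cdist_ge _ _ 1 (by linarith) (by linarith)
              (Or.inl (by push_cast; ring))
  · refine ⟨![2*π, 2*π], fun n => by fin_cases n <;> exact two_pi_mem_Phi2, ?_⟩
    have e1 : Complex.exp ((π/3 : ℝ) * I) = ((1/2 : ℝ) : ℂ) + (((Real.sqrt 3)/2 : ℝ) : ℂ) * I := by
      rw [Complex.exp_mul_I, ← Complex.ofReal_cos, ← Complex.ofReal_sin,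
        Real.cos_pi_div_three, Real.sin_pi_div_three]
    have e2 : Complex.exp ((2*π/3 : ℝ) * I)
        = ((-(1/2) : ℝ) : ℂ) + (((Real.sqrt 3)/2 : ℝ) : ℂ) * I := by
      rw [Complex.exp_mul_I, ← Complex.ofReal_cos, ← Complex.ofReal_sin,
        show (2*π/3 : ℝ) = π - π/3 by ring, Real.cos_pi_sub, Real.sin_pi_sub,
        Real.cos_pi_div_three, Real.sin_pi_div_three, Complex.ofReal_neg]
    have e3 : Complex.exp (((2*π : ℝ) : ℂ) * I) = 1 := by
      rw [show ((2*π : ℝ) : ℂ) * I = 2*π*I by push_cast; ring]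
      exact Complex.exp_two_pi_mul_I
    have e4 : Complex.exp (((π : ℝ) : ℂ) * I) = -1 := Complex.exp_pi_mul_I
    rw [Fin.sum_univ_two, Fin.sum_univ_two]
    show ‖(((1:ℝ)/2 : ℝ) : ℂ)
        + (Complex.exp ((π/3 : ℝ) * I) * Complex.exp (((2*π:ℝ):ℂ) * I)
        + Complex.exp ((2*π/3 : ℝ) * I) * Complex.exp (((π:ℝ):ℂ) * I))‖
      < ‖(((1:ℝ)/2 : ℝ) : ℂ)
        + (Complex.exp ((π/3 : ℝ) * I) * Complex.exp (((2*π:ℝ):ℂ) * I)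
        + Complex.exp ((2*π/3 : ℝ) * I) * Complex.exp (((2*π:ℝ):ℂ) * I))‖
    rw [e1, e2, e3, e4]
    have h3 : Real.sqrt 3 ^ 2 = 3 := Real.sq_sqrt (by norm_num)
    rw [Complex.norm_def, Complex.norm_def]
    apply Real.sqrt_lt_sqrt (Complex.normSq_nonneg _)
    simp only [Complex.normSq_apply, Complex.add_re, Complex.add_im, Complex.mul_re,
      Complex.mul_im, Complex.one_re, Complex.one_im, Complex.neg_re, Complex.neg_im,
      Complex.ofReal_re, Complex.ofReal_im, Complex.I_re, Complex.I_im]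
    nlinarith [Real.sqrt_nonneg 3]
end

section
/- For the binary case $K = 2$ with $\Phi_2 = \{0, \pi\}$, the maximum of $|h_0 + \sum_{n=1}^N \epsilon_n h_n|$ over sign vectors $\epsilon \in \{-1, +1\}^N$ equals $\max_{1 \leq \ell \leq L} |h_0 + \sum_n \epsilon_n^{(\ell)} h_n|$, where $\lambda_1 < \cdots < \lambda_L$ ($L \leq 2N$) are the distinct sorted values of $\{(\alpha_n \pm \pi/2) \bmod 2\pi\}$ and $\epsilon_n^{(\ell)} = \mathrm{sign}(\cos(\angle\mu_\ell - \alpha_n))$ for any $\angle\mu_\ell$ chosen in the open arc $(\lambda_\ell, \lambda_{\ell+1})$. -/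
open Real Complex

/-!
Let `ε₀` be a sign vector maximising `‖S ε‖`, where `S ε = h₀ + ∑ εₙ hₙ`, and let `x = arg (S ε₀)`.
Then `‖S ε₀‖ = Re (S ε₀ e^{-ix})`, and this real part is affine in `ε` with coefficients
`βₙ cos (x - αₙ)`, so it does not decrease when every `εₙ` is replaced by the sign of
`cos (x - αₙ)`. Where that cosine vanishes the sign is arbitrary, so we move `x` slightly to an
angle `θ` at which no `cos (θ - αₙ)` vanishes while the nonzero ones keep their sign: the signs read
off at `θ` are at least as good as `ε₀`, hence optimal.
-/

open Filter Topology

lemma exists_max_on_signVectors {ι : Type*} [Finite ι] (f : (ι → ℝ) → ℝ) :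
    ∃ ε₀ : ι → ℝ, (∀ i, ε₀ i = 1 ∨ ε₀ i = -1) ∧
      ∀ ε : ι → ℝ, (∀ i, ε i = 1 ∨ ε i = -1) → f ε ≤ f ε₀ := by
  have hfin : (Set.univ.pi fun _ : ι => ({1, -1} : Set ℝ)).Finite :=
    Set.Finite.pi fun _ => Set.toFinite _
  obtain ⟨ε₀, h₀, hmax⟩ := Set.exists_max_image _ f hfin ⟨fun _ => 1, by simp⟩
  exact ⟨ε₀, by simpa using h₀, fun ε hε => hmax ε (by simpa using hε)⟩

lemma eventually_cos_sub_ne_zero (x a : ℝ) : ∀ᶠ θ in 𝓝[≠] x, Real.cos (θ - a) ≠ 0 := by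
  have hcont : Continuous fun θ => Real.cos (θ - a) := by fun_prop
  by_cases hx : Real.cos (x - a) = 0
  · have hsin : Real.sin (x - a) ≠ 0 := by
      intro hs
      simpa [hx, hs] using Real.sin_sq_add_cos_sq (x - a)
    have hd : HasDerivAt (fun θ => Real.cos (θ - a)) (-Real.sin (x - a)) x := by
      simpa using ((hasDerivAt_id x).sub_const a).cos
    exact hd.eventually_ne (neg_ne_zero.mpr hsin)
  · exact nhdsWithin_le_nhds (hcont.continuousAt.eventually_ne hx)

lemma eventually_cos_sub_sign_stable {ι : Type*} [Finite ι] (x : ℝ) (α : ι → ℝ) :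
    ∀ᶠ θ in 𝓝[≠] x, ∀ i, Real.cos (θ - α i) ≠ 0 ∧
      (0 < Real.cos (x - α i) → 0 < Real.cos (θ - α i)) ∧
      (Real.cos (x - α i) < 0 → Real.cos (θ - α i) < 0) := by
  refine eventually_all.mpr fun i => ?_
  have hcont : ContinuousAt (fun θ => Real.cos (θ - α i)) x := by fun_prop
  refine (eventually_cos_sub_ne_zero x (α i)).and (nhdsWithin_le_nhds ?_)
  by_cases hpos : 0 < Real.cos (x - α i)
  · filter_upwards [continuousAt_const.eventually_lt hcont hpos] with θ hθ
    exact ⟨fun _ => hθ, fun hneg => absurd hpos hneg.not_gt⟩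
  by_cases hneg : Real.cos (x - α i) < 0
  · filter_upwards [hcont.eventually_lt continuousAt_const hneg] with θ hθ
    exact ⟨fun h => absurd h hpos, fun _ => hθ⟩
  · exact Eventually.of_forall fun _ => ⟨fun h => absurd h hpos, fun h => absurd h hneg⟩

lemma mul_le_ite_pos_mul {ε c g : ℝ} (hε : ε = 1 ∨ ε = -1) (hpos : 0 < c → 0 < g)
    (hneg : c < 0 → g < 0) : ε * c ≤ (if 0 < g then 1 else -1) * c := by
  rcases lt_trichotomy c 0 with hc | rfl | hc
  · rw [if_neg (hneg hc).not_gt]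
    rcases hε with rfl | rfl <;> linarith
  · simp
  · rw [if_pos (hpos hc)]
    rcases hε with rfl | rfl <;> linarith

lemma re_add_sum_ofReal_mul_mul {ι : Type*} [Fintype ι] (z u : ℂ) (ε : ι → ℝ) (w : ι → ℂ) :
    ((z + ∑ i, (ε i : ℂ) * w i) * u).re = (z * u).re + ∑ i, ε i * (w i * u).re := by
  simp only [add_mul, Finset.sum_mul, add_re, re_sum, mul_assoc, re_ofReal_mul]

lemma mul_exp_neg_arg_mul_I (z : ℂ) : z * exp (-(arg z * I)) = ‖z‖ := by
  calc z * exp (-(arg z * I)) = ‖z‖ * (exp (arg z * I) * exp (-(arg z * I))) := by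
        rw [← mul_assoc, norm_mul_exp_arg_mul_I]
    _ = ‖z‖ := by rw [← Complex.exp_add, add_neg_cancel, Complex.exp_zero, mul_one]

lemma re_mul_exp_neg_mul_I_le_norm (z : ℂ) (x : ℝ) : (z * exp (-(x * I))).re ≤ ‖z‖ := by
  calc (z * exp (-(x * I))).re ≤ ‖z * exp (-(x * I))‖ := re_le_norm _
    _ = ‖z‖ := by rw [norm_mul, ← neg_mul, ← ofReal_neg, norm_exp_ofReal_mul_I, mul_one]

lemma re_polar_mul_exp_neg_mul_I (β α x : ℝ) :
    ((β : ℂ) * exp (α * I) * exp (-(x * I))).re = β * Real.cos (x - α) := by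
  rw [mul_assoc, ← Complex.exp_add, ← sub_eq_add_neg, ← sub_mul, ← ofReal_sub, re_ofReal_mul,
    exp_ofReal_mul_I_re, ← Real.cos_neg, neg_sub]

lemma arg_exp_mul_I_of_mem_Ioc {θ : ℝ} (hθ : θ ∈ Set.Ioc (-π) π) : arg (exp (θ * I)) = θ := by
  rw [exp_mul_I, arg_cos_add_sin_mul_I hθ]

theorem exists_angle_sign_pattern_maximizes {ι : Type*} [Fintype ι] (z : ℂ) (β α : ι → ℝ)
    (hβ : ∀ i, 0 < β i) (w : ι → ℂ) (hw : ∀ i, w i = β i * exp (α i * I)) :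
    ∃ θ ∈ Set.Ioo (-π) π, (∀ i, Real.cos (θ - α i) ≠ 0) ∧
      ∀ ε : ι → ℝ, (∀ i, ε i = 1 ∨ ε i = -1) →
        ‖z + ∑ i, (ε i : ℂ) * w i‖ ≤
          ‖z + ∑ i, (if 0 < Real.cos (θ - α i) then (1 : ℂ) else -1) * w i‖ := by
  set S : (ι → ℝ) → ℂ := fun ε => z + ∑ i, (ε i : ℂ) * w i
  obtain ⟨ε₀, hε₀, hmax⟩ := exists_max_on_signVectors fun ε => ‖S ε‖
  set x := (S ε₀).arg
  -- approaching `x` from the left keeps `θ` inside `(-π, π)`, where `arg (exp (θ * I)) = θ`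
  obtain ⟨θ, hstable, hθ⟩ := ((eventually_cos_sub_sign_stable x α).filter_mono
    (nhdsLT_le_nhdsNE x)).and (Ioo_mem_nhdsLT (neg_pi_lt_arg (S ε₀))) |>.exists
  refine ⟨θ, ⟨hθ.1, hθ.2.trans_le (arg_le_pi _)⟩, fun i => (hstable i).1, fun ε hε => ?_⟩
  set σ : ι → ℝ := fun i => if 0 < Real.cos (θ - α i) then 1 else -1
  calc ‖S ε‖ ≤ ‖S ε₀‖ := hmax ε hε
    _ = (S ε₀ * exp (-(x * I))).re := by rw [mul_exp_neg_arg_mul_I, ofReal_re]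
    _ ≤ (S σ * exp (-(x * I))).re := by
      simp only [S, re_add_sum_ofReal_mul_mul, hw, re_polar_mul_exp_neg_mul_I]
      gcongr _ + ∑ i, ?_ with i
      rw [mul_left_comm, mul_left_comm (σ i)]
      exact mul_le_mul_of_nonneg_left
        (mul_le_ite_pos_mul (hε₀ i) (hstable i).2.1 (hstable i).2.2) (hβ i).le
    _ ≤ ‖S σ‖ := re_mul_exp_neg_mul_I_le_norm _ _
    _ = _ := by simp only [S, σ, apply_ite, ofReal_one, ofReal_neg]

theorem stmt_19 (N : ℕ) (β α : Fin (N + 1) → ℝ) (hβ : ∀ n, 0 < β n)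
    (h : Fin (N + 1) → ℂ)
    (hh : ∀ n, h n = (β n : ℂ) * Complex.exp ((α n : ℂ) * Complex.I)) :
    ∃ μ : ℂ, μ ≠ 0 ∧ ‖μ‖ = 1 ∧
      (∀ n : Fin N, Real.cos (μ.arg - α n.succ) ≠ 0) ∧
      ∀ ε : Fin N → ℝ, (∀ n, ε n = 1 ∨ ε n = -1) →
        ‖h 0 + ∑ n : Fin N, (ε n : ℂ) * h n.succ‖
          ≤ ‖h 0 + ∑ n : Fin N,
              ((if 0 < Real.cos (μ.arg - α n.succ) then (1 : ℂ) else -1) * h n.succ)‖ := by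
  obtain ⟨θ, hθ, hne, hmax⟩ := exists_angle_sign_pattern_maximizes (h 0)
    (fun n : Fin N => β n.succ) (fun n => α n.succ) (fun n => hβ n.succ) (fun n => h n.succ)
    (fun n => hh n.succ)
  have harg : (exp (θ * I)).arg = θ := arg_exp_mul_I_of_mem_Ioc (Set.Ioo_subset_Ioc_self hθ)
  exact ⟨exp (θ * I), exp_ne_zero _, norm_exp_ofReal_mul_I θ, by rwa [harg], by rwa [harg]⟩
end
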